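/- arXiv:2005.04198 — 2 statements merged into one kernel-verified Lean document; each statement's English description precedes it below -/
import Mathlib

section
/- Let G = (V,E) be a finite graph with neighborhood independence bounded by a constant c (i.e., every independent set contained in the neighborhood of any vertex has size at most c), and suppose every vertex has degree at least K. If every vertex v selects the K neighbors that immediately succeed v in the circular ordering of the closed neighborhood of v by vertex IDs, then every vertex is selected by at most c·K vertices. -/
/-! Order the selectors of `v` cyclically, starting just after `v`. A selector `w` of `v` lies
in `N(v)`, and any later selector adjacent to `w` lies cyclically between `w` and `v`, so `w` is
adjacent to fewer than `K` later selectors. Greedily keeping the earliest remaining selector and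
discarding its neighbours yields an independent subset of `N(v)` with at least a `1/K` fraction
of the selectors, and such a set has at most `c` elements. -/

/-- `x` lies cyclically strictly between `a` and `b` (IDs in `ℕ`, wrapping around). -/
def cyclBetween (a b x : ℕ) : Prop :=
  if a < b then a < x ∧ x < b else (a < x ∨ x < b)

instance (a b x : ℕ) : Decidable (cyclBetween a b x) := by
  unfold cyclBetween; infer_instance

/-- Under the `K`-Next-Modulo rule, vertex `w` selects vertex `v` iff `v` is a neighbor of `w`
and fewer than `K` members of the (closed) neighborhood of `w` lie cyclically strictly between
`w` and `v` in the ordering by IDs; i.e. `v` is among the `K` neighbors that immediately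
succeed `w` in the circular ID-ordering of `N[w]`. -/
def selects {V : Type*} [Fintype V] [DecidableEq V] (G : SimpleGraph V) [DecidableRel G.Adj]
    (id_ : V → ℕ) (K : ℕ) (w v : V) : Prop :=
  G.Adj w v ∧
    ((G.neighborFinset w).filter (fun u => cyclBetween (id_ w) (id_ v) (id_ u))).card < K

instance {V : Type*} [Fintype V] [DecidableEq V] (G : SimpleGraph V) [DecidableRel G.Adj]
    (id_ : V → ℕ) (K : ℕ) (w v : V) : Decidable (selects G id_ K w v) := by
  unfold selects; infer_instance

/-- Rotated ID order starting just after `b`: IDs above `b` come first, then those up to `b`. -/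
def rotKey (b x : ℕ) : Bool ×ₗ ℕ := toLex (decide (x ≤ b), x)

lemma rotKey_injective (b : ℕ) : Function.Injective (rotKey b) := fun _ _ h =>
  congrArg Prod.snd (toLex.injective h)

lemma cyclBetween_of_rotKey_lt {a b x : ℕ} (hxb : x ≠ b) (h : rotKey b a < rotKey b x) :
    cyclBetween a b x := by
  simp only [rotKey, Prod.Lex.toLex_lt_toLex] at h
  unfold cyclBetween
  by_cases hab : a ≤ b <;> by_cases hxb' : x ≤ b <;> simp +decide [hab, hxb'] at h <;> split_ifs <;>
    omega

namespace SimpleGraph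

variable {V α : Type*} [DecidableEq V] [LinearOrder α] (G : SimpleGraph V) [DecidableRel G.Adj]

theorem exists_isIndepSet_subset_card_le_mul (f : V → α) (K : ℕ) (T : Finset V)
    (hT : ∀ w ∈ T, (T.filter fun x => G.Adj w x ∧ f w ≤ f x).card < K) :
    ∃ s ⊆ T, G.IsIndepSet (s : Set V) ∧ T.card ≤ s.card * K := by
  induction T using Finset.strongInduction with
  | H T ih =>
  obtain rfl | hne := T.eq_empty_or_nonempty
  · exact ⟨∅, subset_rfl, by simp, by simp⟩
  obtain ⟨w, hwT, hwmin⟩ := T.exists_min_image f hne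
  set A := T.filter (G.Adj w)
  have hA : A.card < K := by
    refine lt_of_le_of_lt (Finset.card_le_card fun x hx => ?_) (hT w hwT)
    obtain ⟨hxT, hwx⟩ := Finset.mem_filter.mp hx
    exact Finset.mem_filter.mpr ⟨hxT, hwx, hwmin x hxT⟩
  set T' := T \ insert w A
  have hT'T : T' ⊆ T := Finset.sdiff_subset
  have hwT' : w ∉ T' := fun h => (Finset.mem_sdiff.mp h).2 (Finset.mem_insert_self w A)
  obtain ⟨s, hsT', hs, hcard⟩ := ih T' (Finset.ssubset_iff_of_subset hT'T |>.mpr ⟨w, hwT, hwT'⟩)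
    fun x hx => lt_of_le_of_lt (Finset.card_le_card (Finset.filter_subset_filter _ hT'T))
      (hT x (hT'T hx))
  have hws : ∀ x ∈ s, ¬G.Adj w x := fun x hx hwx =>
    (Finset.mem_sdiff.mp (hsT' hx)).2
      (Finset.mem_insert_of_mem (Finset.mem_filter.mpr ⟨hT'T (hsT' hx), hwx⟩))
  refine ⟨insert w s, Finset.insert_subset hwT (hsT'.trans hT'T), ?_, ?_⟩
  · rw [Finset.coe_insert]
    exact hs.insert fun x hx _ => ⟨hws x hx, fun hxw => hws x hx hxw.symm⟩
  · calc T.card ≤ T'.card + (insert w A).card := Finset.card_le_card_sdiff_add_card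
      _ ≤ s.card * K + K := add_le_add hcard ((Finset.card_insert_le w A).trans hA)
      _ = (insert w s).card * K := by
        rw [Finset.card_insert_of_notMem fun h => hwT' (hsT' h)]; ring

end SimpleGraph

lemma card_later_adj_selectors_lt {V : Type*} [Fintype V] [DecidableEq V] (G : SimpleGraph V)
    [DecidableRel G.Adj] {id_ : V → ℕ} (hid : Function.Injective id_) {K : ℕ} {v w : V}
    (hw : selects G id_ K w v) :
    ((Finset.univ.filter fun x => selects G id_ K x v).filter fun x =>
      G.Adj w x ∧ rotKey (id_ v) (id_ w) ≤ rotKey (id_ v) (id_ x)).card < K := by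
  refine lt_of_le_of_lt (Finset.card_le_card fun x hx => ?_) hw.2
  simp only [Finset.mem_filter, Finset.mem_univ, true_and] at hx
  obtain ⟨hxv, hwx, hkey⟩ := hx
  have hlt : rotKey (id_ v) (id_ w) < rotKey (id_ v) (id_ x) :=
    hkey.lt_of_ne fun h => G.ne_of_adj hwx (hid (rotKey_injective _ h))
  exact Finset.mem_filter.mpr ⟨(G.mem_neighborFinset w x).mpr hwx,
    cyclBetween_of_rotKey_lt (fun h => G.ne_of_adj hxv.1 (hid h)) hlt⟩

theorem kNextModulo_load_bound_general {V : Type*} [Fintype V] [DecidableEq V]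
    (G : SimpleGraph V) [DecidableRel G.Adj] (id_ : V → ℕ) (hid : Function.Injective id_)
    (c K : ℕ)
    (hc : ∀ v : V, ∀ s : Finset V, s ⊆ G.neighborFinset v →
      (∀ a ∈ s, ∀ b ∈ s, ¬ G.Adj a b) → s.card ≤ c) :
    ∀ v : V, (Finset.univ.filter (fun w => selects G id_ K w v)).card ≤ c * K := by
  intro v
  set T := Finset.univ.filter (fun w => selects G id_ K w v)
  obtain ⟨s, hsT, hs, hcard⟩ := G.exists_isIndepSet_subset_card_le_mul
    (fun x => rotKey (id_ v) (id_ x)) K T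
    fun w hw => card_later_adj_selectors_lt G hid (Finset.mem_filter.mp hw).2
  have hsN : s ⊆ G.neighborFinset v := fun x hx =>
    (G.mem_neighborFinset v x).mpr (Finset.mem_filter.mp (hsT hx)).2.1.symm
  have hsc : s.card ≤ c := hc v s hsN fun a ha b hb hab =>
    hs ha hb (G.ne_of_adj hab) hab
  exact hcard.trans (Nat.mul_le_mul_right K hsc)

/-- In a graph with neighborhood independence at most `c` and minimum degree
at least `K`, if every vertex selects the `K` neighbors that immediately succeed it in the
circular ID-ordering of its closed neighborhood, then every vertex is selected by at most
`c * K` vertices. -/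
theorem kNextModulo_load_bound {V : Type*} [Fintype V] [DecidableEq V]
    (G : SimpleGraph V) [DecidableRel G.Adj] (id_ : V → ℕ) (hid : Function.Injective id_)
    (c K : ℕ)
    (hc : ∀ v : V, ∀ s : Finset V, s ⊆ G.neighborFinset v →
      (∀ a ∈ s, ∀ b ∈ s, ¬ G.Adj a b) → s.card ≤ c)
    (hK : ∀ v : V, K ≤ G.degree v) :
    ∀ v : V, (Finset.univ.filter (fun w => selects G id_ K w v)).card ≤ c * K :=
  kNextModulo_load_bound_general G id_ hid c K hc
end

section
/- Let G = (V,E) be a graph with neighborhood independence at most c. In the subgraph G' = (V, E') where E' consists of the edges {v,u} such that u is one of the K neighbors selected by v under the K-Next-Modulo rule, the maximum degree of G' is at most (c+1)·K. -/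
/-!
A vertex `v` selects at most `K` vertices: if `u` is the cyclically last of them, counting from
`v`, all the others are neighbours of `v` strictly between `v` and `u`, and there are fewer than
`K` of those.

For the selectors of `v`, list them in the cyclic order starting just after `v`. A selector `s`
has fewer than `K` neighbours cyclically between `s` and `v`, and these include all its
neighbours among the later selectors. Greedily taking the first remaining selector and discarding
its later neighbours therefore produces an independent subset of `N(v)` of size at least
`#selectors / K`; by neighbourhood independence it has at most `c` elements.
-/

open Finset

namespace SimpleGraph

variable {V : Type*} (G : SimpleGraph V) [DecidableRel G.Adj]

theorem exists_isIndepSet_card_le_mul [DecidableEq V] {α : Type*} [LinearOrder α] (f : V → α)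
    (K : ℕ) (S : Finset V) (hS : ∀ s ∈ S, #{t ∈ S | G.Adj s t ∧ f s ≤ f t} < K) :
    ∃ I ⊆ S, G.IsIndepSet I ∧ #S ≤ K * #I := by
  induction S using Finset.strongInduction with
  | H S ih =>
  obtain rfl | hne := S.eq_empty_or_nonempty
  · exact ⟨∅, subset_rfl, by simp, by simp⟩
  obtain ⟨s, hsS, hmin⟩ := S.exists_min_image f hne
  set R := {t ∈ S | t = s ∨ G.Adj s t}
  have hR : #R ≤ K := by
    have hsub : R ⊆ insert s {t ∈ S | G.Adj s t ∧ f s ≤ f t} := by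
      intro t ht
      obtain ⟨htS, rfl | hadj⟩ := mem_filter.1 ht
      · exact mem_insert_self _ _
      · exact mem_insert_of_mem (mem_filter.2 ⟨htS, hadj, hmin t htS⟩)
    exact (card_le_card hsub).trans ((card_insert_le _ _).trans (hS s hsS))
  have hsR : s ∈ R := mem_filter.2 ⟨hsS, Or.inl rfl⟩
  obtain ⟨I, hIS, hI, hcard⟩ := ih (S \ R) (sdiff_ssubset (filter_subset _ _) ⟨s, hsR⟩)
    fun t ht => (card_le_card (filter_subset_filter _ sdiff_subset)).trans_lt
      (hS t (sdiff_subset ht))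
  have hsep : ∀ t ∈ I, ¬G.Adj s t := fun t ht hadj =>
    (mem_sdiff.1 (hIS ht)).2 (mem_filter.2 ⟨sdiff_subset (hIS ht), Or.inr hadj⟩)
  have hsI : s ∉ I := fun h => (mem_sdiff.1 (hIS h)).2 hsR
  refine ⟨insert s I, insert_subset hsS (hIS.trans sdiff_subset), ?_, ?_⟩
  · rw [coe_insert, IsIndepSet, Set.pairwise_insert]
    exact ⟨hI, fun t ht _ => ⟨hsep t ht, fun hadj => hsep t ht hadj.symm⟩⟩
  · rw [card_insert_of_notMem hsI, ← card_sdiff_add_card_inter S R,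
      inter_eq_right.2 (filter_subset _ _)]
    linarith

end SimpleGraph

/-- The position of `x` in the cyclic order of `ℕ` that starts just after `a`. -/
def cyclKey (a x : ℕ) : ℕ ×ₗ ℕ := toLex (if a < x then 0 else 1, x)

lemma cyclBetween_of_cyclKey_le_start {a b x : ℕ} (h : cyclKey a x ≤ cyclKey a b)
    (hxb : x ≠ b) : cyclBetween a b x := by
  unfold cyclKey cyclBetween at *
  split_ifs at h ⊢ <;> simp_all [Prod.Lex.toLex_le_toLex] <;> omega

lemma cyclBetween_of_cyclKey_le_end {a b x : ℕ} (h : cyclKey b a ≤ cyclKey b x)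
    (hxa : x ≠ a) (hxb : x ≠ b) : cyclBetween a b x := by
  unfold cyclKey cyclBetween at *
  split_ifs at h ⊢ <;> simp_all [Prod.Lex.toLex_le_toLex] <;> omega

section Selection

variable {V : Type*} [Fintype V] [DecidableEq V] (G : SimpleGraph V) [DecidableRel G.Adj]
  {id_ : V → ℕ} (K : ℕ)

lemma card_selected_le (hid : Function.Injective id_) (v : V) :
    #{u | selects G id_ K v u} ≤ K := by
  set T : Finset V := {u | selects G id_ K v u}
  obtain hT | hne := T.eq_empty_or_nonempty
  · simp [hT]
  obtain ⟨u, huT, hmax⟩ := T.exists_max_image (fun u => cyclKey (id_ v) (id_ u)) hne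
  have hsub : T.erase u ⊆
      {w ∈ G.neighborFinset v | cyclBetween (id_ v) (id_ u) (id_ w)} := by
    intro t ht
    obtain ⟨htu, htT⟩ := mem_erase.1 ht
    have hsel : selects G id_ K v t := (mem_filter.1 htT).2
    exact mem_filter.2 ⟨(G.mem_neighborFinset v t).2 hsel.1,
      cyclBetween_of_cyclKey_le_start (hmax t htT) (hid.ne htu)⟩
  have hu : selects G id_ K v u := (mem_filter.1 huT).2
  rw [← card_erase_add_one huT]
  exact (card_le_card hsub).trans_lt hu.2

lemma exists_isIndepSet_subset_neighborFinset_card_selectors_le (hid : Function.Injective id_)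
    (v : V) :
    ∃ I ⊆ G.neighborFinset v, G.IsIndepSet I ∧ #{u | selects G id_ K u v} ≤ K * #I := by
  set S : Finset V := {u | selects G id_ K u v}
  have hS : ∀ s ∈ S,
      #{t ∈ S | G.Adj s t ∧ cyclKey (id_ v) (id_ s) ≤ cyclKey (id_ v) (id_ t)} < K := by
    intro s hs
    refine (card_le_card fun t ht => ?_).trans_lt (mem_filter.1 hs).2.2
    obtain ⟨htS, hadj, hkey⟩ := mem_filter.1 ht
    have htv : G.Adj t v := (mem_filter.1 htS).2.1
    exact mem_filter.2 ⟨(G.mem_neighborFinset s t).2 hadj,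
      cyclBetween_of_cyclKey_le_end hkey (hid.ne hadj.ne') (hid.ne htv.ne)⟩
  obtain ⟨I, hIS, hI, hcard⟩ := G.exists_isIndepSet_card_le_mul _ K S hS
  refine ⟨I, fun u hu => ?_, hI, hcard⟩
  exact (G.mem_neighborFinset v u).2 (mem_filter.1 (hIS hu)).2.1.symm

end Selection

theorem selection_subgraph_maxDegree_general {V : Type*} [Fintype V] [DecidableEq V]
    (G : SimpleGraph V) [DecidableRel G.Adj] (id_ : V → ℕ) (hid : Function.Injective id_)
    (c K : ℕ)
    (hc : ∀ v : V, ∀ s : Finset V, s ⊆ G.neighborFinset v →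
      (∀ a ∈ s, ∀ b ∈ s, ¬ G.Adj a b) → s.card ≤ c) :
    ∀ v : V,
      (Finset.univ.filter
        (fun u => u ≠ v ∧ (selects G id_ K v u ∨ selects G id_ K u v))).card ≤ (c + 1) * K := by
  intro v
  obtain ⟨I, hIv, hI, hselectors⟩ :=
    exists_isIndepSet_subset_neighborFinset_card_selectors_le G K hid v
  have hIc : #I ≤ c := hc v I hIv fun a ha b hb => by
    by_cases hab : a = b
    · exact hab ▸ G.irrefl
    · exact hI ha hb hab
  calc _ ≤ #(univ.filter (selects G id_ K v ·) ∪ univ.filter (selects G id_ K · v)) :=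
        card_le_card fun u hu => by simpa using (mem_filter.1 hu).2.2
    _ ≤ K + K * c := (card_union_le _ _).trans
        (add_le_add (card_selected_le G K hid v) (hselectors.trans (Nat.mul_le_mul_left K hIc)))
    _ = (c + 1) * K := by ring

/-- In the selection subgraph `G' = (V,E')`, where `{v,u} ∈ E'` iff `u` is one
of the `K` neighbors selected by `v` under the `K`-Next-Modulo rule, the maximum degree is at
most `(c+1)·K` (each vertex selects `K` vertices and is selected by at most `c·K` vertices). -/
theorem selection_subgraph_maxDegree {V : Type*} [Fintype V] [DecidableEq V]
    (G : SimpleGraph V) [DecidableRel G.Adj] (id_ : V → ℕ) (hid : Function.Injective id_)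
    (c K : ℕ)
    (hc : ∀ v : V, ∀ s : Finset V, s ⊆ G.neighborFinset v →
      (∀ a ∈ s, ∀ b ∈ s, ¬ G.Adj a b) → s.card ≤ c)
    (hK : ∀ v : V, K ≤ G.degree v) :
    ∀ v : V,
      (Finset.univ.filter
        (fun u => u ≠ v ∧ (selects G id_ K v u ∨ selects G id_ K u v))).card ≤ (c + 1) * K :=
  selection_subgraph_maxDegree_general G id_ hid c K hc
end
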